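/- For every nonnegative integer n and every (γ̃,σ̃) ∈ CP'(n) with ℓ(γ̃) > ℓ_e(γ̃), one has g(f(γ̃,σ̃)) = (γ̃,σ̃). -/

import Mathlib

/-- `ℓ(γ)`: the largest part of `γ` (0 if `γ` is empty). -/
def lgPart (γ : Multiset ℕ) : ℕ := γ.sup

/-- `ℓ_e(γ)`: the largest even part of `γ` (0 if `γ` has no even part). -/
def lgEvenPart (γ : Multiset ℕ) : ℕ := (γ.filter (fun x => x % 2 = 0)).sup

/-- `s(σ)`: the smallest part of `σ` (0 if `σ` is empty). -/
noncomputable def smPart (σ : Multiset ℕ) : ℕ := sInf {x | x ∈ σ}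

/-- `o(γ)`: the unique part size of `γ` occurring an odd number of times
(0 if no part size occurs an odd number of times). -/
noncomputable def oddPart (γ : Multiset ℕ) : ℕ := sInf {x | x ∈ γ ∧ Odd (γ.count x)}

/-- `CP'(n)`: pairs `(γ̃, σ̃)` of partitions with `|γ̃| + |σ̃| = n` such that every part of
`σ̃` is odd, if `σ̃` is nonempty then `s(σ̃) ≥ ℓ(γ̃) + ℓ_e(γ̃)`, at most one part size of `γ̃`
occurs an odd number of times, and any such part size equals `ℓ(γ̃)` or `ℓ_e(γ̃)`. -/
def CPgen (n : ℕ) : Set (Multiset ℕ × Multiset ℕ) :=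
  {p | (∀ x ∈ p.1, 0 < x) ∧ (∀ x ∈ p.2, Odd x) ∧ p.1.sum + p.2.sum = n ∧
       (p.2 ≠ 0 → lgPart p.1 + lgEvenPart p.1 ≤ smPart p.2) ∧
       (∀ x ∈ p.1, ∀ y ∈ p.1, Odd (p.1.count x) → Odd (p.1.count y) → x = y) ∧
       (∀ x ∈ p.1, Odd (p.1.count x) → x = lgPart p.1 ∨ x = lgEvenPart p.1)}

/-- `CP'_o(n)`: pairs in `CP'(n)` for which `ℓ(γ̃)` is odd and occurs an odd number of
times in `γ̃`. -/
def CPgenOdd (n : ℕ) : Set (Multiset ℕ × Multiset ℕ) :=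
  {p ∈ CPgen n | Odd (lgPart p.1) ∧ Odd (p.1.count (lgPart p.1))}

/-- `CP'_e(n)`: pairs in `CP'(n)` for which every part size of `γ̃` occurring an odd number
of times equals `ℓ_e(γ̃)`. -/
def CPgenEven (n : ℕ) : Set (Multiset ℕ × Multiset ℕ) :=
  {p ∈ CPgen n | ∀ x ∈ p.1, Odd (p.1.count x) → x = lgEvenPart p.1}

/-- The map `f`: remove one copy of `ℓ(γ̃)` from `γ̃` and, if `ℓ_e(γ̃) > 0`, also one copy of
`ℓ_e(γ̃)`; add one part of size `ℓ(γ̃) + ℓ_e(γ̃)` to `σ̃`. -/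
def fMap (p : Multiset ℕ × Multiset ℕ) : Multiset ℕ × Multiset ℕ :=
  (if 0 < lgEvenPart p.1 then (p.1.erase (lgPart p.1)).erase (lgEvenPart p.1)
   else p.1.erase (lgPart p.1),
   (lgPart p.1 + lgEvenPart p.1) ::ₘ p.2)

/-- Add a part of size `x` to `μ`, discarding it if it has size 0. -/
def addPos (x : ℕ) (μ : Multiset ℕ) : Multiset ℕ := if 0 < x then x ::ₘ μ else μ

/-- The map `g`: remove one copy of `s(σ̃)` from `σ̃`; add one part of size `o(γ̃)` and one
part of size `s(σ̃) − o(γ̃)` to `γ̃`, parts of size 0 being discarded. -/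
noncomputable def gMap (p : Multiset ℕ × Multiset ℕ) : Multiset ℕ × Multiset ℕ :=
  (addPos (oddPart p.1) (addPos (smPart p.2 - oddPart p.1) p.1), p.2.erase (smPart p.2))

/-! The map `f` takes `ℓ = ℓ(γ̃)` and, when it is positive, `ℓ_e = ℓ_e(γ̃)` out of `γ̃`, so `γ̃` is
recovered by adding both back. This flips the parity of exactly these two multiplicities, so the
odd-multiplicity part `o` of the new first component is `ℓ` or `ℓ_e`: it can only be missing
when `ℓ_e = 0`, since `ℓ` and `ℓ_e` cannot both occur an odd number of times in `γ̃`. The new part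
`ℓ + ℓ_e` is the smallest one of the new second component, so `g` takes it out again and adds
`o` and `ℓ + ℓ_e - o`, which are `ℓ` and `ℓ_e` once more. -/

theorem Multiset.sup_mem_of_ne_bot {α : Type*} [LinearOrder α] [OrderBot α] {s : Multiset α}
    (h : s.sup ≠ ⊥) : s.sup ∈ s := by
  induction s using Multiset.induction with
  | empty => exact absurd Multiset.sup_zero h
  | cons a s ih =>
    rw [Multiset.sup_cons] at h ⊢
    rcases le_total a s.sup with has | hsa
    · rw [sup_eq_right.mpr has] at h ⊢
      exact Multiset.mem_cons_of_mem (ih h)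
    · rw [sup_eq_left.mpr hsa]
      exact Multiset.mem_cons_self a s

lemma lgPart_mem {γ : Multiset ℕ} (h : 0 < lgPart γ) : lgPart γ ∈ γ :=
  Multiset.sup_mem_of_ne_bot h.ne'

lemma lgEvenPart_mem {γ : Multiset ℕ} (h : 0 < lgEvenPart γ) : lgEvenPart γ ∈ γ :=
  Multiset.mem_of_mem_filter (Multiset.sup_mem_of_ne_bot h.ne')

lemma smPart_cons_of_le {a : ℕ} {σ : Multiset ℕ} (h : σ ≠ 0 → a ≤ smPart σ) :
    smPart (a ::ₘ σ) = a := by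
  refine le_antisymm (Nat.sInf_le (Multiset.mem_cons_self a σ))
    (le_csInf ⟨a, Multiset.mem_cons_self a σ⟩ fun x hx => ?_)
  rcases Multiset.mem_cons.mp hx with rfl | hxσ
  · exact le_rfl
  · have hσ : σ ≠ 0 := by
      rintro rfl
      exact Multiset.notMem_zero x hxσ
    exact (h hσ).trans (Nat.sInf_le hxσ)

lemma oddPart_eq_zero {γ : Multiset ℕ} (h : ∀ x, Even (γ.count x)) : oddPart γ = 0 := by
  rw [oddPart, Nat.sInf_eq_zero]
  exact Or.inr (Set.eq_empty_of_forall_notMem fun x hx => Nat.not_odd_iff_even.mpr (h x) hx.2)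

lemma oddPart_mem {γ : Multiset ℕ} (h : ∃ x, Odd (γ.count x)) :
    oddPart γ ∈ γ ∧ Odd (γ.count (oddPart γ)) := by
  obtain ⟨x, hx⟩ := h
  exact Nat.sInf_mem (s := {y | y ∈ γ ∧ Odd (γ.count y)}) ⟨x, Multiset.count_pos.mp hx.pos, hx⟩

section addPos

variable {a b x : ℕ} {μ : Multiset ℕ}

lemma addPos_comm : addPos a (addPos b μ) = addPos b (addPos a μ) := by
  unfold addPos
  split_ifs <;> simp only [Multiset.cons_swap]

lemma mem_addPos_of_mem (h : x ∈ μ) : x ∈ addPos a μ := by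
  unfold addPos
  split_ifs
  exacts [Multiset.mem_cons_of_mem h, h]

lemma count_addPos_of_ne (h : x ≠ a) : (addPos a μ).count x = μ.count x := by
  unfold addPos
  split_ifs
  exacts [Multiset.count_cons_of_ne h μ, rfl]

lemma count_addPos_self (h : 0 < a) : (addPos a μ).count a = μ.count a + 1 := by
  rw [addPos, if_pos h, Multiset.count_cons_self]

lemma oddPart_eq_or_eq_of_addPos {ν : Multiset ℕ} (hν : ν = addPos a (addPos b μ))
    (ha : 0 < a) (hba : b ≠ a)
    (huniq : ∀ x ∈ ν, ∀ y ∈ ν, Odd (ν.count x) → Odd (ν.count y) → x = y)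
    (hodd : ∀ x ∈ ν, Odd (ν.count x) → x = a ∨ x = b) :
    oddPart μ = a ∨ oddPart μ = b := by
  subst hν
  by_cases heven : ∀ x, Even (μ.count x)
  · rw [oddPart_eq_zero heven]
    rcases Nat.eq_zero_or_pos b with hb | hb
    · exact Or.inr hb.symm
    · have hoa : Odd ((addPos a (addPos b μ)).count a) := by
        rw [count_addPos_self ha, count_addPos_of_ne hba.symm]
        exact (heven a).add_one
      have hob : Odd ((addPos a (addPos b μ)).count b) := by
        rw [count_addPos_of_ne hba, count_addPos_self hb]
        exact (heven b).add_one
      exact absurd (huniq b (Multiset.count_pos.mp hob.pos) a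
        (Multiset.count_pos.mp hoa.pos) hob hoa) hba
  · push Not at heven
    obtain ⟨hmem, hcount⟩ := oddPart_mem (by simpa only [Nat.not_even_iff_odd] using heven)
    by_contra! hne
    have hcount' : Odd ((addPos a (addPos b μ)).count (oddPart μ)) := by
      rwa [count_addPos_of_ne hne.1, count_addPos_of_ne hne.2]
    have := hodd _ (mem_addPos_of_mem (mem_addPos_of_mem hmem)) hcount'
    tauto

end addPos

lemma addPos_lgPart_lgEvenPart_fMap_fst {γ σ : Multiset ℕ} (hl : lgEvenPart γ < lgPart γ) :
    addPos (lgPart γ) (addPos (lgEvenPart γ) (fMap (γ, σ)).1) = γ := by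
  have hL : 0 < lgPart γ := (Nat.zero_le _).trans_lt hl
  have hLγ : lgPart γ ∈ γ := lgPart_mem hL
  simp only [fMap, addPos, if_pos hL]
  split_ifs with hE
  · rw [Multiset.cons_erase ((Multiset.mem_erase_of_ne hl.ne).mpr (lgEvenPart_mem hE)),
      Multiset.cons_erase hLγ]
  · exact Multiset.cons_erase hLγ

theorem stmt8 (n : ℕ) (p : Multiset ℕ × Multiset ℕ) (hp : p ∈ CPgen n)
    (hl : lgEvenPart p.1 < lgPart p.1) :
    gMap (fMap p) = p := by
  obtain ⟨γ, σ⟩ := p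
  obtain ⟨-, -, -, hsm, huniq, hodd⟩ := hp
  set L := lgPart γ
  set E := lgEvenPart γ
  set μ := (fMap (γ, σ)).1
  have hγ : addPos L (addPos E μ) = γ := addPos_lgPart_lgEvenPart_fMap_fst hl
  have hs : smPart ((L + E) ::ₘ σ) = L + E := smPart_cons_of_le hsm
  have ho : oddPart μ = L ∨ oddPart μ = E :=
    oddPart_eq_or_eq_of_addPos hγ.symm ((Nat.zero_le E).trans_lt hl) hl.ne huniq hodd
  rw [show fMap (γ, σ) = (μ, (L + E) ::ₘ σ) from rfl, gMap, hs, Multiset.erase_cons_head]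
  rcases ho with ho | ho <;> rw [ho]
  · rw [Nat.add_sub_cancel_left, hγ]
  · rw [Nat.add_sub_cancel, addPos_comm, hγ]
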